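/- arXiv:2006.14020 — 5 statements merged into one kernel-verified Lean document; each statement's English description precedes it below -/
import Mathlib

section
/- Let N ≥ 1, θ ∈ ℝ, and let J be the N×N complex matrix with entries J_{jl} = exp(i·|j−l|·θ). Then det(J) = (1 − exp(2iθ))^{N−1}. -/
open Complex

/-- The qubit-qubit coupling matrix for `N` equally spaced qubits coupled to a
1D waveguide: `J j l = exp(i |j - l| θ)`. -/
noncomputable def couplingMatrix (N : ℕ) (θ : ℝ) : Matrix (Fin N) (Fin N) ℂ :=
  fun j l => Complex.exp (Complex.I * (((j : ℤ) - (l : ℤ)).natAbs : ℂ) * (θ : ℂ))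

lemma couplingMatrix_pow (N : ℕ) (θ : ℝ) (j l : Fin N) :
    couplingMatrix N θ j l
      = Complex.exp (Complex.I * θ) ^ (((j : ℤ) - (l : ℤ)).natAbs) := by
  rw [couplingMatrix, ← Complex.exp_nat_mul]
  ring_nf

theorem det_couplingMatrix (N : ℕ) (hN : 1 ≤ N) (θ : ℝ) :
    (couplingMatrix N θ).det = (1 - Complex.exp (2 * Complex.I * θ)) ^ (N - 1) := by
  obtain ⟨n, rfl⟩ : ∃ n, N = n + 1 := ⟨N - 1, (Nat.succ_pred_eq_of_pos hN).symm⟩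
  set ρ : ℂ := Complex.exp (Complex.I * θ) with hρ
  have hsq : Complex.exp (2 * Complex.I * θ) = ρ * ρ := by
    rw [hρ, ← Complex.exp_add]; ring_nf
  set J := couplingMatrix (n + 1) θ with hJ
  set L : Matrix (Fin (n + 1)) (Fin (n + 1)) ℂ :=
    fun j l => if j = l then 1 else if (l : ℕ) + 1 = (j : ℕ) then -ρ else 0 with hL
  -- entries of L * J
  have mul0 : ∀ j : Fin (n + 1), (L * J) 0 j = J 0 j := by
    intro j
    rw [Matrix.mul_apply]
    rw [Finset.sum_congr rfl (fun k _ => show L 0 k * J k j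
        = (if k = 0 then J k j else 0) by
      by_cases h : k = 0
      · simp [hL, h]
      · have hk : (0 : Fin (n+1)) ≠ k := fun hh => h hh.symm
        simp [hL, hk, h])]
    simp
  have mulS : ∀ (m : Fin n) (j : Fin (n + 1)),
      (L * J) m.succ j = J m.succ j - ρ * J m.castSucc j := by
    intro m j
    rw [Matrix.mul_apply]
    rw [Finset.sum_congr rfl (fun k _ => show L m.succ k * J k j
        = (if k = m.succ then J k j else 0)
          + (if k = m.castSucc then -ρ * J k j else 0) by
      have hcs : m.succ ≠ m.castSucc := by
        intro h; have := congrArg Fin.val h; simp at this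
      by_cases h1 : k = m.succ
      · have h2 : k ≠ m.castSucc := by
          rw [h1]; intro hc
          have := congrArg (Fin.val) hc
          simp at this
        simp [hL, h1, h2, hcs]
      · by_cases h2 : k = m.castSucc
        · have hne : m.succ ≠ k := fun hh => h1 hh.symm
          have hv : (k : ℕ) + 1 = (m.succ : ℕ) := by
            rw [h2]; simp
        
          simp [hL, hne, h1, h2, hv, hcs, hcs.symm]
        · have hne : m.succ ≠ k := fun hh => h1 hh.symm
          have hv : (k : ℕ) + 1 ≠ (m.succ : ℕ) := by
            intro hc
            apply h2
            apply Fin.ext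
            simpa using Nat.succ_injective (by simpa using hc)
          have hkm : (k : ℕ) ≠ (m : ℕ) := fun hc => h2 (Fin.ext (by simpa using hc))
          simp [hL, hne, hv, h1, h2, hkm])]
    rw [Finset.sum_add_distrib, Finset.sum_ite_eq', Finset.sum_ite_eq']
    simp
    ring
  -- L * J is upper triangular
  have hupper : (L * J).BlockTriangular id := by
    intro i j hij
    simp only [id] at hij
    induction i using Fin.cases with
    | zero => exact absurd hij (by simp)
    | succ m =>
      rw [mulS m j]
      have hj : (j : ℕ) ≤ (m : ℕ) := by
        have := hij
        simp [Fin.lt_def] at this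
        omega
      rw [hJ, couplingMatrix_pow, couplingMatrix_pow]
      have e1 : (((m.succ : Fin (n+1)) : ℤ) - (j : ℤ)).natAbs
          = (((m.castSucc : Fin (n+1)) : ℤ) - (j : ℤ)).natAbs + 1 := by
        simp only [Fin.val_succ, Fin.coe_castSucc]
        omega
      rw [e1, pow_succ]
      ring
  -- determinant of L
  have hdetL : L.det = 1 := by
    have hlt : L.BlockTriangular OrderDual.toDual := by
      intro i j hij
      have hij' : i < j := hij
      have h1 : i ≠ j := ne_of_lt hij'
      have h2 : (j : ℕ) + 1 ≠ (i : ℕ) := by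
        have := Fin.lt_def.mp hij'; omega
      simp [hL, h1, h2]
    rw [Matrix.det_of_lowerTriangular L hlt]
    have : ∀ i : Fin (n+1), L i i = 1 := fun i => by simp [hL]
    simp [this]
  -- compute
  have key : J.det = (1 - ρ * ρ) ^ n := by
    have h1 : (L * J).det = J.det := by
      rw [Matrix.det_mul, hdetL, one_mul]
    rw [← h1, Matrix.det_of_upperTriangular hupper]
    rw [Fin.prod_univ_succ]
    have hd0 : (L * J) 0 0 = 1 := by
      rw [mul0, hJ, couplingMatrix_pow]; simp
    have hds : ∀ m : Fin n, (L * J) m.succ m.succ = 1 - ρ * ρ := by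
      intro m
      rw [mulS, hJ, couplingMatrix_pow, couplingMatrix_pow]
      have e1 : (((m.succ : Fin (n+1)) : ℤ) - ((m.succ : Fin (n+1)) : ℤ)).natAbs = 0 := by
        omega
      have e2 : (((m.castSucc : Fin (n+1)) : ℤ) - ((m.succ : Fin (n+1)) : ℤ)).natAbs = 1 := by
        simp only [Fin.val_succ, Fin.coe_castSucc]
        omega
      rw [e1, e2]
      ring
    rw [hd0, one_mul]
    rw [Finset.prod_congr rfl (fun m _ => hds m)]
    simp
  rw [key, hsq]
  simp
end

section
/- The coupling matrix J with entries J_{jl} = exp(i·|j−l|·θ) is singular if and only if θ = nπ for some integer n (assuming N ≥ 2). -/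
/-!
`J` is the Kac–Murdock–Szegő matrix `(ρ ^ |j - l|)` with `ρ = exp (i θ)`. Subtracting `ρ` times
each row from the next one makes it upper triangular with diagonal `1, 1 - ρ², …, 1 - ρ²`, so
`det J = (1 - ρ²) ^ (N - 1)`, which vanishes iff `exp (2 i θ) = 1`, i.e. iff `θ ∈ π ℤ`.
-/

open Complex

namespace Matrix

variable {R : Type*} [CommRing R]

def kacMurdockSzego (n : ℕ) (ρ : R) : Matrix (Fin n) (Fin n) R :=
  of fun i j => ρ ^ ((i : ℤ) - j).natAbs

theorem kacMurdockSzego_succ_of_le {n : ℕ} (ρ : R) {i : Fin n} {j : Fin (n + 1)}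
    (h : j ≤ i.castSucc) :
    kacMurdockSzego (n + 1) ρ i.succ j = ρ * kacMurdockSzego (n + 1) ρ i.castSucc j := by
  rw [Fin.le_def, Fin.val_castSucc] at h
  simp only [kacMurdockSzego, of_apply, Fin.val_succ, Fin.val_castSucc, ← pow_succ']
  congr 1
  omega

theorem det_kacMurdockSzego (n : ℕ) (ρ : R) :
    (kacMurdockSzego (n + 1) ρ).det = (1 - ρ ^ 2) ^ n := by
  set K := kacMurdockSzego (n + 1) ρ
  set B : Matrix (Fin (n + 1)) (Fin (n + 1)) R :=
    of (Fin.cases (K 0) fun i j => K i.succ j - ρ * K i.castSucc j)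
  have hB : B.IsUpperTriangular := by
    intro i j hji
    induction i using Fin.cases with
    | zero => exact absurd hji (Fin.not_lt_zero j)
    | succ i =>
      simp only [B, of_apply, Fin.cases_succ, sub_eq_zero]
      exact kacMurdockSzego_succ_of_le ρ (Fin.le_castSucc_iff.mpr hji)
  calc K.det = B.det :=
        det_eq_of_forall_row_eq_smul_add_pred (fun _ ↦ ρ) (fun _ ↦ rfl) fun i j ↦ by simp [B]
    _ = ∏ i, B i i := det_of_isUpperTriangular hB
    _ = (1 - ρ ^ 2) ^ n := by
      simp [Fin.prod_univ_succ, B, K, kacMurdockSzego, sq]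

end Matrix

theorem couplingMatrix_eq_kacMurdockSzego (N : ℕ) (θ : ℝ) :
    couplingMatrix N θ = Matrix.kacMurdockSzego N (exp (θ * I)) := by
  ext j l
  rw [couplingMatrix, Matrix.kacMurdockSzego, Matrix.of_apply, ← exp_nat_mul]
  ring_nf

theorem exp_mul_I_sq_eq_one_iff (θ : ℝ) : exp (θ * I) ^ 2 = 1 ↔ ∃ n : ℤ, θ = n * Real.pi := by
  rw [← exp_nat_mul, exp_eq_one_iff]
  refine exists_congr fun n ↦ ?_
  calc ((2 : ℕ) : ℂ) * (θ * I) = n * (2 * Real.pi * I) ↔ 2 * I * θ = 2 * I * (n * Real.pi) := by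
        constructor <;> intro h <;> linear_combination h
    _ ↔ (θ : ℂ) = n * Real.pi := mul_right_inj' (by simp)
    _ ↔ θ = n * Real.pi := by norm_cast

/-- The coupling matrix is singular iff `θ = n π` for some integer `n`. -/
theorem couplingMatrix_singular_iff (N : ℕ) (hN : 2 ≤ N) (θ : ℝ) :
    (couplingMatrix N θ).det = 0 ↔ ∃ n : ℤ, θ = n * Real.pi := by
  obtain ⟨n, rfl⟩ : ∃ n, N = n + 1 := ⟨N - 1, by omega⟩
  rw [couplingMatrix_eq_kacMurdockSzego, Matrix.det_kacMurdockSzego,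
    pow_eq_zero_iff (by omega), sub_eq_zero, eq_comm, exp_mul_I_sq_eq_one_iff]
end

section
/- Let p ∈ ℂ, and let L be the N×N lower triangular matrix with L_{aj} = p^{a−j} for a ≥ j and 0 otherwise, and U the N×N upper triangular matrix with U_{1j} = p^{j−1}, U_{aj} = p^{j−a}(1 − p²) for 1 < a ≤ j, and 0 for j < a. Then (L·U)_{aj} = p^{|a−j|} for all a, j. -/
/-- Lower triangular matrix `L a j = p^(a-j)` for `a ≥ j`, `0` otherwise
(indices `0, …, N-1`). -/
def lowerL (N : ℕ) (p : ℂ) : Matrix (Fin N) (Fin N) ℂ :=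
  fun a j => if (j : ℕ) ≤ (a : ℕ) then p ^ ((a : ℕ) - (j : ℕ)) else 0

/-- Upper triangular matrix with first row `U 0 j = p^j`, and
`U a j = p^(j-a) (1 - p²)` for `0 < a ≤ j`, `0` for `j < a`. -/
def upperU (N : ℕ) (p : ℂ) : Matrix (Fin N) (Fin N) ℂ :=
  fun a j =>
    if (a : ℕ) = 0 then p ^ (j : ℕ)
    else if (a : ℕ) ≤ (j : ℕ) then p ^ ((j : ℕ) - (a : ℕ)) * (1 - p ^ 2)
    else 0

private lemma telescope (p : ℂ) (a j : ℕ) :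
    ∀ m, 2 * m ≤ a + j →
      p ^ (a + j) + ∑ k ∈ Finset.range m, p ^ (a + j - 2 * (k + 1)) * (1 - p ^ 2)
        = p ^ (a + j - 2 * m) := by
  intro m
  induction m with
  | zero => simp
  | succ m ih =>
    intro h
    rw [Finset.sum_range_succ, ← add_assoc, ih (by omega)]
    have hn : a + j - 2 * m = (a + j - 2 * (m + 1)) + 2 := by omega
    rw [hn]
    ring

/-- The explicit LU decomposition of the coupling matrix: `(L·U) a j = p^|a-j|`. -/
theorem lowerL_mul_upperU (N : ℕ) (p : ℂ) (a j : Fin N) :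
    (lowerL N p * upperU N p) a j = p ^ (((a : ℤ) - (j : ℤ)).natAbs) := by
  set g : ℕ → ℂ := fun k =>
    (if k ≤ (a : ℕ) then p ^ ((a : ℕ) - k) else 0) *
    (if k = 0 then p ^ (j : ℕ)
     else if k ≤ (j : ℕ) then p ^ ((j : ℕ) - k) * (1 - p ^ 2) else 0) with hg
  set m : ℕ := min (a : ℕ) (j : ℕ) with hm
  have h1 : (lowerL N p * upperU N p) a j = ∑ i ∈ Finset.range N, g i := by
    rw [Matrix.mul_apply, ← Fin.sum_univ_eq_sum_range]
    rfl
  have h2 : ∑ i ∈ Finset.range N, g i = ∑ i ∈ Finset.range (m + 1), g i := by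
    refine (Finset.sum_subset ?_ ?_).symm
    · intro x hx
      simp only [Finset.mem_range] at *
      have : m < N := lt_of_le_of_lt (min_le_left _ _) a.isLt
      omega
    · intro x _ hx
      simp only [Finset.mem_range, not_lt] at hx
      have : ¬ x ≤ (a : ℕ) ∨ (¬ x = 0 ∧ ¬ x ≤ (j : ℕ)) := by omega
      rcases this with h | ⟨h0, hj⟩
      · simp [hg, h]
      · simp [hg, h0, hj]
  have h3 : ∑ i ∈ Finset.range (m + 1), g i
      = p ^ ((a : ℕ) + (j : ℕ)) +
        ∑ k ∈ Finset.range m, p ^ ((a : ℕ) + (j : ℕ) - 2 * (k + 1)) * (1 - p ^ 2) := by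
    rw [Finset.sum_range_succ']
    have hg0 : g 0 = p ^ ((a : ℕ) + (j : ℕ)) := by
      simp [hg, pow_add]
    rw [hg0, add_comm]
    congr 1
    refine Finset.sum_congr rfl fun k hk => ?_
    simp only [Finset.mem_range] at hk
    have hka : k + 1 ≤ (a : ℕ) := by omega
    have hkj : k + 1 ≤ (j : ℕ) := by omega
    simp only [hg]
    rw [if_pos hka, if_neg (Nat.succ_ne_zero k), if_pos hkj, ← mul_assoc, ← pow_add]
    congr 2
    omega
  rw [h1, h2, h3, telescope p (a : ℕ) (j : ℕ) m (by omega)]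
  congr 1
  omega
end

section
/- If θ is not an integer multiple of π, then the coupling matrix J with J_{jl} = exp(i|j−l|θ) is invertible, and hence the zero vector is the only vector annihilated by J; in particular the system α'(t) = −(γ₀/2) J α(t) has no nonzero stationary solutions (no bound states in continuum). -/
open Complex

lemma couplingMatrix_apply (N : ℕ) (θ : ℝ) (j l : Fin N) :
    couplingMatrix N θ j l = Complex.exp (Complex.I * θ) ^ ((j : ℤ) - (l : ℤ)).natAbs := by
  rw [couplingMatrix, ← Complex.exp_nat_mul]
  ring_nf

/-- The lower bidiagonal row-operation matrix. -/
noncomputable def rowOp (N : ℕ) (z : ℂ) : Matrix (Fin N) (Fin N) ℂ :=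
  Matrix.of fun j l => if j = l then 1 else if (l : ℕ) + 1 = (j : ℕ) then -z else 0

lemma rowOp_det (N : ℕ) (z : ℂ) : (rowOp N z).det = 1 := by
  rw [Matrix.det_of_lowerTriangular]
  · simp [rowOp]
  · intro i j hij
    have hlt : (i : ℕ) < (j : ℕ) := hij
    simp only [rowOp, Matrix.of_apply]
    rw [if_neg (by intro h; subst h; omega), if_neg (by omega)]

lemma mul_coupling (N : ℕ) (θ : ℝ) (j l : Fin N) :
    (rowOp N (Complex.exp (Complex.I * θ)) * couplingMatrix N θ) j l =
      if (j : ℕ) = 0 then couplingMatrix N θ j l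
      else couplingMatrix N θ j l
        - Complex.exp (Complex.I * θ) * Complex.exp (Complex.I * θ) ^ (((j : ℤ) - 1 - l).natAbs) := by
  set z := Complex.exp (Complex.I * θ) with hz
  rw [Matrix.mul_apply]
  by_cases h0 : (j : ℕ) = 0
  · rw [if_pos h0]
    rw [Finset.sum_eq_single j]
    · simp [rowOp]
    · intro k _ hk
      have : ¬ ((k : ℕ) + 1 = (j : ℕ)) := by omega
      simp [rowOp, (Ne.symm hk), this]
    · simp
  · rw [if_neg h0]
    have hj1 : (j : ℕ) - 1 < N := by omega
    set j' : Fin N := ⟨(j : ℕ) - 1, hj1⟩ with hj'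
    have hne : j ≠ j' := by
      intro h
      apply h0
      have := congrArg (fun x : Fin N => (x : ℕ)) h
      simp [hj'] at this
      omega
    rw [Finset.sum_eq_add j j' hne]
    · have h1 : rowOp N z j j = 1 := by simp [rowOp]
      have h2 : rowOp N z j j' = -z := by
        rw [rowOp, Matrix.of_apply, if_neg hne, if_pos]
        show (j : ℕ) - 1 + 1 = (j : ℕ); omega
      have h3 : ((j' : ℤ) - (l : ℤ)).natAbs = ((j : ℤ) - 1 - (l : ℤ)).natAbs := by
        show (((j : ℕ) - 1 : ℕ) - (l : ℤ)).natAbs = _; omega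
      rw [h1, h2, couplingMatrix_apply, couplingMatrix_apply, h3, ← hz]
      ring
    · intro k _ hk
      have hkk : ¬ ((k : ℕ) + 1 = (j : ℕ)) := by
        intro h
        exact hk.2 (Fin.ext (show (k : ℕ) = (j : ℕ) - 1 by omega))
      simp [rowOp, Ne.symm hk.1, hkk]
    · simp
    · simp

lemma coupling_det_ne_zero (N : ℕ) (θ : ℝ) (hθ : ∀ n : ℤ, θ ≠ n * Real.pi) :
    (couplingMatrix N θ).det ≠ 0 := by
  set z := Complex.exp (Complex.I * θ) with hz
  have hz2 : 1 - z * z ≠ 0 := by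
    intro h
    have hzz : z * z = 1 := by linear_combination -h
    have hz2' : Complex.exp (Complex.I * θ + Complex.I * θ) = 1 := by
      rw [Complex.exp_add, ← hz]; exact hzz
    rw [Complex.exp_eq_one_iff] at hz2'
    obtain ⟨n, hn⟩ := hz2'
    apply hθ n
    have h' : Complex.I * (2 * (θ : ℂ)) = Complex.I * ((n : ℂ) * (2 * Real.pi)) := by
      push_cast at hn ⊢
      linear_combination hn
    have h2 : (2 * θ : ℂ) = (n : ℂ) * (2 * Real.pi) :=
      mul_left_cancel₀ Complex.I_ne_zero h'
    have h3 : (2 * θ : ℝ) = n * (2 * Real.pi) := by exact_mod_cast h2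
    linarith
  -- determinant of rowOp * coupling
  have htri : (rowOp N z * couplingMatrix N θ).BlockTriangular id := by
    intro i j hij
    have hij' : (j : ℕ) < (i : ℕ) := hij
    rw [mul_coupling, if_neg (by omega), couplingMatrix_apply]
    have h1 : ((i : ℤ) - (j : ℤ)).natAbs = ((i : ℤ) - 1 - (j : ℤ)).natAbs + 1 := by omega
    rw [h1, pow_succ]
    ring
  have hdetmul : (rowOp N z * couplingMatrix N θ).det =
      ∏ i : Fin N, (rowOp N z * couplingMatrix N θ) i i :=
    Matrix.det_of_upperTriangular htri
  have hdiag : ∀ i : Fin N, (rowOp N z * couplingMatrix N θ) i i ≠ 0 := by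
    intro i
    rw [mul_coupling]
    by_cases h0 : (i : ℕ) = 0
    · rw [if_pos h0, couplingMatrix_apply]
      simp
    · rw [if_neg h0, couplingMatrix_apply]
      have h1 : ((i : ℤ) - (i : ℤ)).natAbs = 0 := by omega
      have h2 : ((i : ℤ) - 1 - (i : ℤ)).natAbs = 1 := by omega
      rw [h1, h2, pow_zero, pow_one]
      exact fun h => hz2 (by linear_combination h)
  have hprod : (rowOp N z * couplingMatrix N θ).det ≠ 0 := by
    rw [hdetmul]
    exact Finset.prod_ne_zero_iff.mpr (fun i _ => hdiag i)
  intro h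
  apply hprod
  rw [Matrix.det_mul, h, mul_zero]

/-- If `θ` is not an integer multiple of `π`, the coupling matrix is invertible,
its kernel is trivial, and the system `α' = -(γ₀/2) J α` has no nonzero stationary
solutions (no bound states in continuum). -/
theorem no_BIC_away_from_singularities (N : ℕ) (θ : ℝ)
    (hθ : ∀ n : ℤ, θ ≠ n * Real.pi) (γ₀ : ℝ) (hγ : 0 < γ₀) :
    IsUnit (couplingMatrix N θ) ∧
      (∀ v : Fin N → ℂ, (couplingMatrix N θ).mulVec v = 0 → v = 0) ∧
      (∀ v : Fin N → ℂ,
        (∀ t : ℝ, HasDerivAt (fun _ : ℝ => v)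
          (-((γ₀ : ℂ) / 2) • (couplingMatrix N θ).mulVec v) t) → v = 0) := by
  have hdet : IsUnit (couplingMatrix N θ).det :=
    isUnit_iff_ne_zero.mpr (coupling_det_ne_zero N θ hθ)
  have hker : ∀ v : Fin N → ℂ, (couplingMatrix N θ).mulVec v = 0 → v = 0 := by
    intro v hv
    calc v = Matrix.mulVec 1 v := by rw [Matrix.one_mulVec]
    _ = ((couplingMatrix N θ)⁻¹ * couplingMatrix N θ).mulVec v := by
        rw [Matrix.nonsing_inv_mul _ hdet]
    _ = (couplingMatrix N θ)⁻¹.mulVec ((couplingMatrix N θ).mulVec v) := by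
        rw [Matrix.mulVec_mulVec]
    _ = 0 := by rw [hv, Matrix.mulVec_zero]
  refine ⟨(Matrix.isUnit_iff_isUnit_det _).mpr hdet, hker, ?_⟩
  intro v hv
  have h0 : (-((γ₀ : ℂ) / 2) • (couplingMatrix N θ).mulVec v) = 0 :=
    (hv 0).unique (hasDerivAt_const 0 v)
  have hc : (-((γ₀ : ℂ) / 2)) ≠ 0 := by
    simp only [ne_eq, neg_eq_zero, div_eq_zero_iff]
    push_neg
    constructor
    · exact_mod_cast hγ.ne'
    · norm_num
  exact hker v ((smul_eq_zero.mp h0).resolve_left hc)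
end

section
/- For N = 3 and θ = 2π + δ, the characteristic polynomial of the coupling matrix J(θ) in the eigenvalue variable λ, expanded to second order in δ, has roots λ_sup = 3 + O(δ), λ₊ = −(2/3)iδ + (2/27)δ² + O(δ³), and λ₋ = −2iδ + 2δ² + O(δ³); in particular Re λ₋ / Re λ₊ → 27 as δ → 0. -/
/-!
Write `z = exp(iθ)`, which equals `exp(iδ)` for `θ = 2π + δ`, so that
`J = !![1, z, z²; z, 1, z; z², z, 1]`. The antisymmetric vector `(1, 0, -1)` is an eigenvector
with eigenvalue `λ₋ = 1 - z²`, and on the symmetric subspace spanned by `(1, 0, 1)` and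
`(0, 1, 0)` the characteristic polynomial is `q(μ) = μ² - (2 + z²)μ + (1 - z²)`, with
discriminant `z²(z² + 8)`. Taking the principal square root `√(z² + 8) ≈ 3` singles out the
root `λ_sup ≈ 3`, and the other root `λ₊` is located by evaluating `q` at the second-order
approximation `a = -(2/3)iδ + (2/27)δ²`: `q(a) = (a - λ₊)(a - λ_sup)` is `O(δ³)` while
`|a - λ_sup| ≥ 2`. The expansion `z² = 1 + 2iδ - 2δ² + O(δ³)` gives `λ₋` directly, and the
real parts `2δ² + O(δ³)` and `(2/27)δ² + O(δ³)` have ratio tending to `27`.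
-/

open Complex Filter

open Topology

lemma Complex.sqrt_sq (w : ℂ) : Complex.sqrt w ^ 2 = w := by
  simp [Complex.sqrt]

lemma Complex.re_sqrt_nonneg (w : ℂ) : 0 ≤ (Complex.sqrt w).re := by
  rw [Complex.sqrt, cpow_inv_two_re]
  exact Real.sqrt_nonneg _

lemma Complex.norm_sqrt_sub_le (w : ℂ) {c : ℝ} (hc : 0 < c) :
    ‖Complex.sqrt w - c‖ ≤ ‖w - c ^ 2‖ / c := by
  have hfar : c ≤ ‖Complex.sqrt w + c‖ :=
    calc c ≤ (Complex.sqrt w + c).re := by simp [Complex.re_sqrt_nonneg w]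
      _ ≤ ‖Complex.sqrt w + c‖ := Complex.re_le_norm _
  rw [le_div_iff₀ hc]
  calc ‖Complex.sqrt w - c‖ * c ≤ ‖Complex.sqrt w - c‖ * ‖Complex.sqrt w + c‖ := by gcongr
    _ = ‖Complex.sqrt w ^ 2 - c ^ 2‖ := by rw [← norm_mul]; ring_nf
    _ = ‖w - c ^ 2‖ := by rw [Complex.sqrt_sq]

lemma Complex.abs_re_sub_le_of_norm_sub_le {w c : ℂ} {r : ℝ} (h : ‖w - c‖ ≤ r) :
    |w.re - c.re| ≤ r :=
  (sub_re w c ▸ abs_re_le_norm (w - c)).trans h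

lemma tendsto_div_sq_of_abs_sub_le {f : ℝ → ℝ} {a K : ℝ}
    (hf : ∀ᶠ δ in 𝓝 0, |f δ - a * δ ^ 2| ≤ K * |δ| ^ 3) :
    Tendsto (fun δ => f δ / δ ^ 2) (𝓝[≠] 0) (𝓝 a) := by
  have hK : Tendsto (fun δ : ℝ => K * |δ|) (𝓝[≠] 0) (𝓝 0) :=
    ((continuous_const.mul continuous_abs).tendsto' 0 0 (by simp)).mono_left nhdsWithin_le_nhds
  refine tendsto_sub_nhds_zero_iff.mp (squeeze_zero_norm' ?_ hK)
  filter_upwards [nhdsWithin_le_nhds hf, self_mem_nhdsWithin] with δ hδ hδ0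
  have hδ2 : 0 < δ ^ 2 := by have : δ ≠ 0 := hδ0; positivity
  rw [Real.norm_eq_abs, div_sub' hδ2.ne', abs_div, abs_of_pos hδ2, div_le_iff₀ hδ2]
  calc |f δ - δ ^ 2 * a| = |f δ - a * δ ^ 2| := by rw [mul_comm]
    _ ≤ K * |δ| ^ 3 := hδ
    _ = K * |δ| * δ ^ 2 := by rw [← sq_abs δ]; ring

lemma tendsto_div_of_abs_sub_le {f g : ℝ → ℝ} {a b K : ℝ} (hb : b ≠ 0)
    (hf : ∀ᶠ δ in 𝓝 0, |f δ - a * δ ^ 2| ≤ K * |δ| ^ 3)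
    (hg : ∀ᶠ δ in 𝓝 0, |g δ - b * δ ^ 2| ≤ K * |δ| ^ 3) :
    Tendsto (fun δ => f δ / g δ) (𝓝[≠] 0) (𝓝 (a / b)) := by
  refine ((tendsto_div_sq_of_abs_sub_le hf).div (tendsto_div_sq_of_abs_sub_le hg) hb).congr' ?_
  filter_upwards [self_mem_nhdsWithin] with δ hδ0
  exact div_div_div_cancel_right₀ (pow_ne_zero 2 hδ0) _ _

namespace ThreeQubit

lemma couplingMatrix_three_sub_smul (θ : ℝ) (μ : ℂ) :
    couplingMatrix 3 θ - μ • (1 : Matrix (Fin 3) (Fin 3) ℂ) =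
      !![1 - μ, cexp (I * θ), cexp (I * θ) ^ 2;
         cexp (I * θ), 1 - μ, cexp (I * θ);
         cexp (I * θ) ^ 2, cexp (I * θ), 1 - μ] := by
  have h2 : cexp (I * 2 * θ) = cexp (I * θ) ^ 2 := by
    rw [← Complex.exp_nat_mul]; ring_nf
  ext i j
  fin_cases i <;> fin_cases j <;> simp [couplingMatrix, h2]

lemma det_couplingMatrix_three_sub_smul (θ : ℝ) (μ : ℂ) :
    (couplingMatrix 3 θ - μ • (1 : Matrix (Fin 3) (Fin 3) ℂ)).det =
      -((μ - (1 - cexp (I * θ) ^ 2)) *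
        (μ ^ 2 - (2 + cexp (I * θ) ^ 2) * μ + (1 - cexp (I * θ) ^ 2))) := by
  rw [couplingMatrix_three_sub_smul, Matrix.det_fin_three]
  simp only [Fin.isValue, Matrix.of_apply, Matrix.cons_val', Matrix.cons_val_zero,
    Matrix.cons_val_fin_one, Matrix.cons_val_one, Matrix.cons_val]
  ring

noncomputable def lamMinus (z : ℂ) : ℂ := 1 - z ^ 2

noncomputable def lamPlus (z : ℂ) : ℂ := (2 + z ^ 2 - z * Complex.sqrt (z ^ 2 + 8)) / 2

noncomputable def lamSup (z : ℂ) : ℂ := (2 + z ^ 2 + z * Complex.sqrt (z ^ 2 + 8)) / 2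

lemma symmetric_charpoly_eq (z μ : ℂ) :
    μ ^ 2 - (2 + z ^ 2) * μ + (1 - z ^ 2) = (μ - lamPlus z) * (μ - lamSup z) := by
  unfold lamPlus lamSup
  linear_combination (z ^ 2 / 4) * Complex.sqrt_sq (z ^ 2 + 8)

theorem det_couplingMatrix_three_sub_smul_eq_zero_iff (θ : ℝ) (μ : ℂ) :
    (couplingMatrix 3 θ - μ • (1 : Matrix (Fin 3) (Fin 3) ℂ)).det = 0 ↔
      μ = lamMinus (cexp (I * θ)) ∨ μ = lamPlus (cexp (I * θ)) ∨ μ = lamSup (cexp (I * θ)) := by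
  rw [det_couplingMatrix_three_sub_smul, symmetric_charpoly_eq, neg_eq_zero]
  simp only [mul_eq_zero, sub_eq_zero, lamMinus]

lemma lamSup_sub_lamPlus (z : ℂ) : lamSup z - lamPlus z = z * Complex.sqrt (z ^ 2 + 8) := by
  unfold lamPlus lamSup; ring

lemma lamMinus_sub_mul_lamMinus_sub (z : ℂ) :
    (lamMinus z - lamPlus z) * (lamMinus z - lamSup z) = -2 * z ^ 2 * (1 - z ^ 2) := by
  rw [← symmetric_charpoly_eq, lamMinus]; ring

theorem eigenvalues_pairwise_ne {z : ℂ} (hz : ‖z‖ = 1) (hz2 : z ^ 2 ≠ 1) :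
    lamSup z ≠ lamPlus z ∧ lamSup z ≠ lamMinus z ∧ lamPlus z ≠ lamMinus z := by
  have hz0 : z ≠ 0 := norm_ne_zero_iff.mp (by rw [hz]; exact one_ne_zero)
  have hsqrt : Complex.sqrt (z ^ 2 + 8) ≠ 0 := by
    intro h
    have h8 : z ^ 2 = -8 := by
      linear_combination -(Complex.sqrt_sq (z ^ 2 + 8)) + Complex.sqrt (z ^ 2 + 8) * h
    have := congrArg norm h8
    norm_num [norm_pow, hz] at this
  have hprod : (lamMinus z - lamPlus z) * (lamMinus z - lamSup z) ≠ 0 := by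
    rw [lamMinus_sub_mul_lamMinus_sub]
    exact mul_ne_zero (mul_ne_zero (by norm_num) (pow_ne_zero 2 hz0)) (sub_ne_zero.mpr hz2.symm)
  refine ⟨?_, ?_, ?_⟩
  · rw [← sub_ne_zero, lamSup_sub_lamPlus]; exact mul_ne_zero hz0 hsqrt
  · exact fun h => hprod (by rw [h, sub_self, mul_zero])
  · exact fun h => hprod (by rw [h, sub_self, zero_mul])

lemma norm_lamSup_sub_three_le {z : ℂ} (hz : ‖z‖ = 1) : ‖lamSup z - 3‖ ≤ 3 * ‖z - 1‖ := by
  have hz2 : ‖z ^ 2 - 1‖ ≤ 2 * ‖z - 1‖ := by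
    rw [show z ^ 2 - 1 = (z - 1) * (z + 1) by ring, norm_mul, mul_comm]
    gcongr
    calc ‖z + 1‖ ≤ ‖z‖ + ‖(1 : ℂ)‖ := norm_add_le _ _
      _ = 2 := by rw [hz, norm_one]; norm_num
  have hsqrt : ‖Complex.sqrt (z ^ 2 + 8) - 3‖ ≤ ‖z ^ 2 - 1‖ / 3 := by
    have := Complex.norm_sqrt_sub_le (z ^ 2 + 8) (c := 3) (by norm_num)
    push_cast at this
    convert this using 3; ring
  have hsplit : lamSup z - 3 =
      ((z ^ 2 - 1) + z * (Complex.sqrt (z ^ 2 + 8) - 3) + 3 * (z - 1)) / 2 := by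
    unfold lamSup; ring
  rw [hsplit, norm_div, Complex.norm_two]
  have := norm_add₃_le (a := z ^ 2 - 1) (b := z * (Complex.sqrt (z ^ 2 + 8) - 3))
    (c := 3 * (z - 1))
  rw [norm_mul, norm_mul, hz, one_mul, Complex.norm_ofNat] at this
  linarith [norm_nonneg (z - 1)]

lemma cexp_I_mul_two_pi_add (δ : ℝ) : cexp (I * ↑(2 * Real.pi + δ)) = cexp (I * δ) := by
  rw [show I * ↑(2 * Real.pi + δ) = I * δ + 2 * Real.pi * I by push_cast; ring,
    Complex.exp_add, Complex.exp_two_pi_mul_I, mul_one]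

lemma cexp_I_mul_sq_ne_one {δ : ℝ} (h0 : δ ≠ 0) (hδ : |δ| < Real.pi / 2) :
    cexp (I * δ) ^ 2 ≠ 1 := by
  intro h
  have hsin : Real.sin (2 * δ) = 0 := by
    have h2δ : cexp (↑(2 * δ) * I) = cexp (I * δ) ^ 2 := by
      rw [← Complex.exp_nat_mul]; push_cast; ring_nf
    rw [← Complex.exp_ofReal_mul_I_im, h2δ, h, Complex.one_im]
  rw [abs_lt] at hδ
  rw [Real.sin_eq_zero_iff_of_lt_of_lt (by linarith) (by linarith)] at hsin
  exact h0 (by linarith)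

lemma norm_lamSup_cexp_sub_three_le (δ : ℝ) : ‖lamSup (cexp (I * δ)) - 3‖ ≤ 3 * |δ| := by
  refine (norm_lamSup_sub_three_le (Complex.norm_exp_I_mul_ofReal δ)).trans ?_
  have := Real.norm_exp_I_mul_ofReal_sub_one_le (x := δ)
  rw [Real.norm_eq_abs] at this
  linarith

lemma norm_cexp_I_mul_sq_sub_le {δ : ℝ} (hδ : |δ| ≤ 1 / 2) :
    ‖cexp (I * δ) ^ 2 - (1 + 2 * I * δ - 2 * δ ^ 2)‖ ≤ 2 * |δ| ^ 3 := by
  have hx : ‖I * (2 * δ : ℂ)‖ = 2 * |δ| := by simp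
  have hbound := Complex.exp_bound (x := I * (2 * δ)) (n := 3) (by rw [hx]; linarith) (by norm_num)
  have hsq : cexp (I * (2 * δ)) = cexp (I * δ) ^ 2 := by
    rw [← Complex.exp_nat_mul]; ring_nf
  have htaylor : ∑ m ∈ Finset.range 3, (I * (2 * δ : ℂ)) ^ m / m.factorial =
      1 + 2 * I * δ - 2 * δ ^ 2 := by
    rw [Finset.sum_range_succ, Finset.sum_range_succ, Finset.sum_range_one]
    norm_num [Nat.factorial]
    linear_combination (2 * (δ : ℂ) ^ 2) * I_sq
  rw [hsq, htaylor, hx] at hbound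
  norm_num [Nat.factorial] at hbound
  nlinarith [pow_nonneg (abs_nonneg δ) 3]

lemma norm_lamMinus_cexp_sub_le {δ : ℝ} (hδ : |δ| ≤ 1 / 2) :
    ‖lamMinus (cexp (I * δ)) - (-2 * I * δ + 2 * δ ^ 2)‖ ≤ 2 * |δ| ^ 3 := by
  have h : lamMinus (cexp (I * δ)) - (-2 * I * δ + 2 * δ ^ 2) =
      -(cexp (I * δ) ^ 2 - (1 + 2 * I * δ - 2 * δ ^ 2)) := by
    unfold lamMinus; ring
  rw [h, norm_neg]
  exact norm_cexp_I_mul_sq_sub_le hδ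

lemma norm_lamPlus_sub_le {z a : ℂ} {d : ℝ} (hd : 0 < d) (ha : d ≤ ‖a - lamSup z‖) :
    ‖lamPlus z - a‖ ≤ ‖a ^ 2 - (2 + z ^ 2) * a + (1 - z ^ 2)‖ / d := by
  rw [le_div_iff₀ hd, symmetric_charpoly_eq, norm_mul, norm_sub_rev]
  gcongr

noncomputable def lamPlusApprox (δ : ℝ) : ℂ := -(2 / 3) * I * δ + (2 / 27) * δ ^ 2

lemma re_lamPlusApprox (δ : ℝ) : (lamPlusApprox δ).re = 2 / 27 * δ ^ 2 := by
  simp [lamPlusApprox, ← ofReal_pow]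

lemma norm_lamPlusApprox_le {δ : ℝ} (hδ : |δ| ≤ 1 / 10) : ‖lamPlusApprox δ‖ ≤ 1 / 10 := by
  refine (norm_add_le _ _).trans ?_
  simp only [norm_mul, norm_neg, norm_pow, norm_I, Complex.norm_real, Real.norm_eq_abs]
  norm_num
  nlinarith [abs_nonneg δ, sq_abs δ]

/-- `lamPlusApprox δ` is chosen so that this residual vanishes to second order in `δ`. -/
lemma symmetric_charpoly_lamPlusApprox (z : ℂ) (δ : ℝ) :
    lamPlusApprox δ ^ 2 - (2 + z ^ 2) * lamPlusApprox δ + (1 - z ^ 2) =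
      (-(128 / 81) * I * δ ^ 3 + (112 / 729) * δ ^ 4) -
        (z ^ 2 - (1 + 2 * I * δ - 2 * δ ^ 2)) * (lamPlusApprox δ + 1) := by
  unfold lamPlusApprox
  ring_nf; rw [I_sq]; ring

lemma norm_symmetric_charpoly_lamPlusApprox_le {δ : ℝ} (hδ : |δ| ≤ 1 / 10) :
    ‖lamPlusApprox δ ^ 2 - (2 + cexp (I * δ) ^ 2) * lamPlusApprox δ + (1 - cexp (I * δ) ^ 2)‖ ≤
      6 * |δ| ^ 3 := by
  have hB : ‖-(128 / 81) * I * (δ : ℂ) ^ 3 + (112 / 729) * (δ : ℂ) ^ 4‖ ≤ 2 * |δ| ^ 3 := by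
    refine (norm_add_le _ _).trans ?_
    simp only [norm_mul, norm_neg, norm_pow, norm_I, Complex.norm_real, Real.norm_eq_abs]
    norm_num
    nlinarith [abs_nonneg δ, pow_nonneg (abs_nonneg δ) 3]
  have hr := norm_cexp_I_mul_sq_sub_le (δ := δ) (by linarith)
  have ha : ‖lamPlusApprox δ + 1‖ ≤ 2 := by
    refine (norm_add_le _ _).trans ?_
    linarith [norm_lamPlusApprox_le hδ, norm_one (α := ℂ)]
  rw [symmetric_charpoly_lamPlusApprox]
  refine (norm_sub_le _ _).trans ?_
  rw [norm_mul]
  nlinarith [mul_le_mul hr ha (norm_nonneg _) (by positivity)]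

lemma norm_lamPlus_sub_lamPlusApprox_le {δ : ℝ} (hδ : |δ| ≤ 1 / 10) :
    ‖lamPlus (cexp (I * δ)) - lamPlusApprox δ‖ ≤ 3 * |δ| ^ 3 := by
  have hfar : 2 ≤ ‖lamPlusApprox δ - lamSup (cexp (I * δ))‖ := by
    have h3 := norm_add₃_le (a := lamPlusApprox δ)
      (b := -(lamPlusApprox δ - lamSup (cexp (I * δ)))) (c := -(lamSup (cexp (I * δ)) - 3))
    rw [show lamPlusApprox δ + -(lamPlusApprox δ - lamSup (cexp (I * δ))) +
        -(lamSup (cexp (I * δ)) - 3) = 3 by ring, norm_neg, norm_neg, Complex.norm_ofNat] at h3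
    linarith [norm_lamPlusApprox_le hδ, norm_lamSup_cexp_sub_three_le δ]
  refine (norm_lamPlus_sub_le two_pos hfar).trans ?_
  linarith [norm_symmetric_charpoly_lamPlusApprox_le hδ]

lemma tendsto_re_lamMinus_div_re_lamPlus :
    Tendsto (fun δ : ℝ => (lamMinus (cexp (I * δ))).re / (lamPlus (cexp (I * δ))).re)
      (𝓝[≠] 0) (𝓝 27) := by
  have hsmall : ∀ᶠ δ : ℝ in 𝓝 0, |δ| ≤ 1 / 10 := by
    simpa using (eventually_abs_sub_lt (0 : ℝ) (by norm_num : (0 : ℝ) < 1 / 10)).mono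
      fun _ h => h.le
  have hM : ∀ᶠ δ : ℝ in 𝓝 0, |(lamMinus (cexp (I * δ))).re - 2 * δ ^ 2| ≤ 3 * |δ| ^ 3 := by
    filter_upwards [hsmall] with δ hδ
    have hre : (-2 * I * δ + 2 * δ ^ 2 : ℂ).re = 2 * δ ^ 2 := by simp [← ofReal_pow]
    have := Complex.abs_re_sub_le_of_norm_sub_le (norm_lamMinus_cexp_sub_le (δ := δ) (by linarith))
    rw [hre] at this
    linarith [pow_nonneg (abs_nonneg δ) 3]
  have hP : ∀ᶠ δ : ℝ in 𝓝 0, |(lamPlus (cexp (I * δ))).re - 2 / 27 * δ ^ 2| ≤ 3 * |δ| ^ 3 := by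
    filter_upwards [hsmall] with δ hδ
    rw [← re_lamPlusApprox]
    exact Complex.abs_re_sub_le_of_norm_sub_le (norm_lamPlus_sub_lamPlusApprox_le hδ)
  convert tendsto_div_of_abs_sub_le (by norm_num) hM hP using 2
  norm_num

end ThreeQubit

/-- For `N = 3` and `θ = 2π + δ`, the three eigenvalues of `J(θ)` satisfy
`λ_sup = 3 + O(δ)`, `λ₊ = -(2/3)iδ + (2/27)δ² + O(δ³)` and
`λ₋ = -2iδ + 2δ² + O(δ³)`; in particular `Re λ₋ / Re λ₊ → 27` as `δ → 0`. -/
theorem three_qubit_decay_rates :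
    ∃ ε > (0 : ℝ), ∃ C > (0 : ℝ), ∃ lamSup lamP lamM : ℝ → ℂ,
      (∀ δ : ℝ, |δ| < ε → δ ≠ 0 →
        ((couplingMatrix 3 (2 * Real.pi + δ) - lamSup δ • (1 : Matrix (Fin 3) (Fin 3) ℂ)).det = 0 ∧
         (couplingMatrix 3 (2 * Real.pi + δ) - lamP δ • (1 : Matrix (Fin 3) (Fin 3) ℂ)).det = 0 ∧
         (couplingMatrix 3 (2 * Real.pi + δ) - lamM δ • (1 : Matrix (Fin 3) (Fin 3) ℂ)).det = 0 ∧
         lamSup δ ≠ lamP δ ∧ lamSup δ ≠ lamM δ ∧ lamP δ ≠ lamM δ)) ∧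
      (∀ δ : ℝ, |δ| < ε →
        ‖lamSup δ - 3‖ ≤ C * |δ| ∧
        ‖lamP δ - (-(2 / 3) * Complex.I * (δ : ℂ) + (2 / 27) * (δ : ℂ) ^ 2)‖
          ≤ C * |δ| ^ 3 ∧
        ‖lamM δ - (-2 * Complex.I * (δ : ℂ) + 2 * (δ : ℂ) ^ 2)‖
          ≤ C * |δ| ^ 3) ∧
      Tendsto (fun δ : ℝ => (lamM δ).re / (lamP δ).re) (nhdsWithin 0 {0}ᶜ)
        (nhds 27) := by
  refine ⟨1 / 10, by norm_num, 3, by norm_num, fun δ => ThreeQubit.lamSup (cexp (I * δ)),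
    fun δ => ThreeQubit.lamPlus (cexp (I * δ)), fun δ => ThreeQubit.lamMinus (cexp (I * δ)),
    ?_, ?_, ThreeQubit.tendsto_re_lamMinus_div_re_lamPlus⟩
  · intro δ hδ hδ0
    have hz2 := ThreeQubit.cexp_I_mul_sq_ne_one hδ0 (by linarith [Real.pi_gt_three])
    simp only [ThreeQubit.det_couplingMatrix_three_sub_smul_eq_zero_iff,
      ThreeQubit.cexp_I_mul_two_pi_add, true_or, or_true]
    exact ⟨trivial, trivial, trivial,
      ThreeQubit.eigenvalues_pairwise_ne (norm_exp_I_mul_ofReal δ) hz2⟩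
  · intro δ hδ
    have hδ' : |δ| ≤ 1 / 10 := hδ.le
    exact ⟨ThreeQubit.norm_lamSup_cexp_sub_three_le δ,
      ThreeQubit.norm_lamPlus_sub_lamPlusApprox_le hδ',
      (ThreeQubit.norm_lamMinus_cexp_sub_le (by linarith)).trans (by gcongr; norm_num)⟩
end
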